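/- arXiv:1611.08177 — 3 statements merged into one kernel-verified Lean document; each statement's English description precedes it below -/
import Mathlib

section
/- Let x ∈ ℝ², l > 0, let p = (p₁,p₂) be an integer pair with 0 ≤ p₁ ≤ p₂, and let k ≥ 0 be an integer. Then for n = 4k one has I_p(f_n^x, x, l) = (1/(4k+2)!) · T_p^(k) · (l/2)^{4k}. -/
open MeasureTheory Real Filter Topology

noncomputable section

/-- The `l`-square centered at `x`. -/
def Dsq (x : ℝ × ℝ) (l : ℝ) : Set (ℝ × ℝ) :=
  Set.Icc (x.1 - l / 2) (x.1 + l / 2) ×ˢ Set.Icc (x.2 - l / 2) (x.2 + l / 2)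

/-- `I(f,x,l)`: the average of `f` over the `l`-square centered at `x`. -/
def Iavg (f : ℝ × ℝ → ℝ) (x : ℝ × ℝ) (l : ℝ) : ℝ :=
  (1 / l ^ 2) * ∫ ξ in Dsq x l, f ξ

/-- `D(x',l)` is a `p`-neighbor of `D(x,l)`. -/
def isNbr (p : ℤ × ℤ) (l : ℝ) (x x' : ℝ × ℝ) : Prop :=
  (|x'.1 - x.1| = (p.1 : ℝ) * l ∧ |x'.2 - x.2| = (p.2 : ℝ) * l) ∨
    (|x'.1 - x.1| = (p.2 : ℝ) * l ∧ |x'.2 - x.2| = (p.1 : ℝ) * l)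

/-- `I_p(f,x,l)`: sum of averages over all `p`-neighbors of `D(x,l)`. -/
def Ipavg (f : ℝ × ℝ → ℝ) (p : ℤ × ℤ) (x : ℝ × ℝ) (l : ℝ) : ℝ :=
  ∑ᶠ x' ∈ {x' : ℝ × ℝ | isNbr p l x x'}, Iavg f x' l

/-- The constant `c_p` (for integer pairs with `0 ≤ p₁ ≤ p₂`). -/
def cP (p : ℤ × ℤ) : ℝ :=
  if p.1 = 0 ∧ p.2 = 0 then 1 / 8 else if p.1 = 0 ∨ p.1 = p.2 then 1 / 2 else 1

/-- The constant `T_p^(k)`. -/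
def Tc (p : ℤ × ℤ) (k : ℕ) : ℝ :=
  2 * cP p *
    (((2 * (p.1 : ℂ) + 1) + (2 * (p.2 : ℂ) + 1) * Complex.I) ^ (4 * k + 2)
      - ((2 * (p.1 : ℂ) - 1) + (2 * (p.2 : ℂ) + 1) * Complex.I) ^ (4 * k + 2)
      + ((2 * (p.1 : ℂ) - 1) + (2 * (p.2 : ℂ) - 1) * Complex.I) ^ (4 * k + 2)
      - ((2 * (p.1 : ℂ) + 1) + (2 * (p.2 : ℂ) - 1) * Complex.I) ^ (4 * k + 2)).im

/-- The polynomial harmonic function `f_n^x`. -/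
def fP (x : ℝ × ℝ) (n : ℕ) (ξ : ℝ × ℝ) : ℝ :=
  ∑ j ∈ Finset.range (n / 2 + 1),
    (-1 : ℝ) ^ j * (ξ.1 - x.1) ^ (n - 2 * j) * (ξ.2 - x.2) ^ (2 * j) /
      (((n - 2 * j).factorial : ℝ) * ((2 * j).factorial : ℝ))

/-- The polynomial harmonic function `g_n^x`. -/
def gP (x : ℝ × ℝ) (n : ℕ) (ξ : ℝ × ℝ) : ℝ :=
  ∑ j ∈ Finset.range ((n - 1) / 2 + 1),
    (-1 : ℝ) ^ j * (ξ.1 - x.1) ^ (n - 2 * j - 1) * (ξ.2 - x.2) ^ (2 * j + 1) /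
      (((n - 2 * j - 1).factorial : ℝ) * ((2 * j + 1).factorial : ℝ))

/-- Partial derivative in the first coordinate. -/
def pd1 (f : ℝ × ℝ → ℝ) (y : ℝ × ℝ) : ℝ := fderiv ℝ f y (1, 0)

/-- Partial derivative in the second coordinate. -/
def pd2 (f : ℝ × ℝ → ℝ) (y : ℝ × ℝ) : ℝ := fderiv ℝ f y (0, 1)

/-- `h` is harmonic on the open set `Ω`. -/
def HarmonicOn (h : ℝ × ℝ → ℝ) (Ω : Set (ℝ × ℝ)) : Prop :=
  ContDiffOn ℝ 2 h Ω ∧ ∀ y ∈ Ω, pd1 (pd1 h) y + pd2 (pd2 h) y = 0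

/-- `‖𝒫‖ = max_{p ∈ 𝒫} ‖2p+(1,1)‖`. -/
def PNorm (P : Finset (ℤ × ℤ)) : ℝ :=
  sSup ((fun p : ℤ × ℤ =>
    Real.sqrt ((2 * (p.1 : ℝ) + 1) ^ 2 + (2 * (p.2 : ℝ) + 1) ^ 2)) '' ↑P)

/-- The four corners of the unit square. -/
def qv : Fin 4 → ℝ × ℝ := ![(0, 0), (1, 0), (1, 1), (0, 1)]

/-- The contraction `F_i(x) = (x + q_i)/2`. -/
def Fc (i : Fin 4) (x : ℝ × ℝ) : ℝ × ℝ := ((x.1 + (qv i).1) / 2, (x.2 + (qv i).2) / 2)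

/-- `F_w = F_{w₁} ∘ ⋯ ∘ F_{w_m}` for a word `w` of length `m`. -/
def Fword {m : ℕ} (w : Fin m → Fin 4) : ℝ × ℝ → ℝ × ℝ :=
  (List.ofFn w).foldr (fun i acc => Fc i ∘ acc) id

/-- The center of the `m`-cell `F_w S`. -/
def cellCtr {m : ℕ} (w : Fin m → Fin 4) : ℝ × ℝ := Fword w (1 / 2, 1 / 2)

/-- `B_w(f)`: the average of `f` over the `m`-cell `F_w S` (a dyadic square of
side length `2⁻ᵐ` centered at `cellCtr w`). -/
def Bav (f : ℝ × ℝ → ℝ) {m : ℕ} (w : Fin m → Fin 4) : ℝ :=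
  Iavg f (cellCtr w) ((1 / 2) ^ m)

/-!
With `z = (ξ₁ - x₁) + i (ξ₂ - x₂)` one has `f_n^x = Re zⁿ / n!` and
`g_{n+2}^x = Im z^{n+2} / (n+2)!`, and `∂₁∂₂ g_{n+2}^x = f_n^x`. Hence the integral of `f_n^x`
over a square is the alternating sum of `Im z^{n+2} / (n+2)!` over its four corners. For `n = 4k`
the function `(s, t) ↦ Im (s + t i)^{4k+2}` is odd in each variable and symmetric (because
`i^{4k+2} = -1`), so all `8 c_p` neighbours of `D(x, l)` give the same corner sum, which after
scaling by `l / 2` is the one defining `T_p^(k)`.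
-/

open Complex Finset

def cornerSum (G : ℝ → ℝ → ℝ) (a b h : ℝ) : ℝ :=
  G (a + h) (b + h) - G (a - h) (b + h) + G (a - h) (b - h) - G (a + h) (b - h)

section cornerSum

variable {G : ℝ → ℝ → ℝ} {a b h : ℝ}

theorem cornerSum_sum {ι : Type*} (S : Finset ι) (G : ι → ℝ → ℝ → ℝ) :
    cornerSum (fun s t => ∑ i ∈ S, G i s t) a b h = ∑ i ∈ S, cornerSum (G i) a b h := by
  simp only [cornerSum, sum_sub_distrib, sum_add_distrib]

theorem cornerSum_neg_left (hG : ∀ s t, G (-s) t = -G s t) :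
    cornerSum G (-a) b h = cornerSum G a b h := by
  simp only [cornerSum, show -a + h = -(a - h) by ring, show -a - h = -(a + h) by ring, hG]
  ring

theorem cornerSum_neg_right (hG : ∀ s t, G s (-t) = -G s t) :
    cornerSum G a (-b) h = cornerSum G a b h := by
  simp only [cornerSum, show -b + h = -(b - h) by ring, show -b - h = -(b + h) by ring, hG]
  ring

theorem cornerSum_swap (hG : ∀ s t, G t s = G s t) :
    cornerSum G b a h = cornerSum G a b h := by
  simp only [cornerSum]
  rw [hG (b + h), hG (b - h), hG (b - h), hG (b + h)]
  ring

theorem cornerSum_congr_abs (hG₁ : ∀ s t, G (-s) t = -G s t) (hG₂ : ∀ s t, G s (-t) = -G s t)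
    {a' b' : ℝ} (ha : |a'| = |a|) (hb : |b'| = |b|) :
    cornerSum G a' b' h = cornerSum G a b h := by
  rcases abs_eq_abs.mp ha with rfl | rfl <;> rcases abs_eq_abs.mp hb with rfl | rfl <;>
    simp only [cornerSum_neg_left hG₁, cornerSum_neg_right hG₂]

theorem cornerSum_mul_mul {N : ℕ} (hG : ∀ r s t, G (r * s) (r * t) = r ^ N * G s t) (r : ℝ) :
    cornerSum G (r * a) (r * b) (r * h) = r ^ N * cornerSum G a b h := by
  simp only [cornerSum, ← mul_add, ← mul_sub, hG]

end cornerSum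

def imPow (N : ℕ) (s t : ℝ) : ℝ := (((s : ℂ) + t * I) ^ N).im

section imPow

variable {N : ℕ}

theorem imPow_mul_mul (r s t : ℝ) : imPow N (r * s) (r * t) = r ^ N * imPow N s t := by
  simp only [imPow, ofReal_mul, show (r : ℂ) * s + r * t * I = r * (s + t * I) by ring, mul_pow,
    ← ofReal_pow, im_ofReal_mul]

theorem imPow_neg_right (s t : ℝ) : imPow N s (-t) = -imPow N s t := by
  simp only [imPow, ofReal_neg]
  rw [show (s : ℂ) + -t * I = (starRingEnd ℂ) (s + t * I) by simp [conj_ofReal], ← map_pow,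
    conj_im]

theorem imPow_neg_left (hN : Even N) (s t : ℝ) : imPow N (-s) t = -imPow N s t := by
  simp only [imPow, ofReal_neg]
  rw [show -(s : ℂ) + t * I = -(starRingEnd ℂ) (s + t * I) by simp [conj_ofReal]; ring, hN.neg_pow,
    ← map_pow, conj_im]

theorem imPow_swap (hN : N % 4 = 2) (s t : ℝ) : imPow N t s = imPow N s t := by
  have hI : I ^ N = -1 := by
    rw [← Nat.div_add_mod N 4, hN, pow_add, pow_mul, I_pow_four, one_pow, one_mul, I_sq]
  simp only [imPow]
  rw [show (t : ℂ) + s * I = I * (starRingEnd ℂ) (s + t * I) by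
      simp [conj_ofReal]; linear_combination (t : ℂ) * I_sq,
    mul_pow, hI, ← map_pow, neg_one_mul, neg_im, conj_im, neg_neg]

end imPow

theorem Finset.sum_range_eq_sum_odd {M : Type*} [AddCommMonoid M] {F : ℕ → M}
    (hF : ∀ j, F (2 * j) = 0) (n : ℕ) :
    ∑ m ∈ range n, F m = ∑ j ∈ range (n / 2), F (2 * j + 1) := by
  induction n with
  | zero => rfl
  | succ n ih =>
    rw [sum_range_succ, ih]
    rcases Nat.even_or_odd' n with ⟨j, rfl | rfl⟩
    · rw [hF, add_zero, show (2 * j + 1) / 2 = 2 * j / 2 by omega]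
    · rw [show (2 * j + 1 + 1) / 2 = (2 * j + 1) / 2 + 1 by omega, sum_range_succ,
        show (2 * j + 1) / 2 = j by omega]

theorem imPow_eq_sum (N : ℕ) (s t : ℝ) :
    imPow N s t = ∑ j ∈ range ((N + 1) / 2),
      (-1) ^ j * (N.choose (2 * j + 1) : ℝ) * s ^ (N - 2 * j - 1) * t ^ (2 * j + 1) := by
  have hterm : ∀ m, (((t : ℂ) * I) ^ m * (s : ℂ) ^ (N - m) * (N.choose m : ℂ)).im
      = t ^ m * s ^ (N - m) * N.choose m * (I ^ m).im := by
    intro m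
    rw [show ((t : ℂ) * I) ^ m * (s : ℂ) ^ (N - m) * (N.choose m : ℂ)
        = ((t ^ m * s ^ (N - m) * N.choose m : ℝ) : ℂ) * I ^ m by push_cast; ring, im_ofReal_mul]
  rw [imPow, add_comm, add_pow, im_sum]
  simp only [hterm]
  rw [sum_range_eq_sum_odd]
  · refine sum_congr rfl fun j _ => ?_
    rw [pow_succ I, pow_mul I, I_sq, ← ofReal_one, ← ofReal_neg, ← ofReal_pow, mul_im, ofReal_re,
      ofReal_im, I_re, I_im, Nat.sub_sub]
    ring
  · intro j
    rw [pow_mul I, I_sq, ← ofReal_one, ← ofReal_neg, ← ofReal_pow, ofReal_im, mul_zero]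

theorem gP_eq_imPow (x ξ : ℝ × ℝ) {N : ℕ} (hN : 0 < N) :
    gP x N ξ = imPow N (ξ.1 - x.1) (ξ.2 - x.2) / N.factorial := by
  rw [imPow_eq_sum, sum_div, gP, show (N - 1) / 2 + 1 = (N + 1) / 2 by omega]
  refine sum_congr rfl fun j hj => ?_
  have hj : 2 * j + 1 ≤ N := by rw [mem_range] at hj; omega
  rw [Nat.cast_choose ℝ hj, Nat.sub_sub]
  field_simp

theorem integral_Dsq_mul (f g : ℝ → ℝ) (c : ℝ × ℝ) {l : ℝ} (hl : 0 ≤ l) :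
    ∫ ξ in Dsq c l, f ξ.1 * g ξ.2
      = (∫ u in c.1 - l / 2..c.1 + l / 2, f u) * ∫ v in c.2 - l / 2..c.2 + l / 2, g v := by
  rw [Dsq, Measure.volume_eq_prod, setIntegral_prod_mul, integral_Icc_eq_integral_Ioc,
    integral_Icc_eq_integral_Ioc, ← intervalIntegral.integral_of_le (by linarith),
    ← intervalIntegral.integral_of_le (by linarith)]

theorem integral_sub_pow (a b c : ℝ) (m : ℕ) :
    ∫ u in a..b, (u - c) ^ m = ((b - c) ^ (m + 1) - (a - c) ^ (m + 1)) / (m + 1) := by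
  rw [intervalIntegral.integral_comp_sub_right (· ^ m), integral_pow]

theorem integral_Dsq_fP (x c : ℝ × ℝ) {l : ℝ} (hl : 0 ≤ l) {n : ℕ} (hn : Even n) :
    ∫ ξ in Dsq c l, fP x n ξ = cornerSum (fun s t => gP x (n + 2) (s, t)) c.1 c.2 (l / 2) := by
  have hrange : (n + 2 - 1) / 2 + 1 = n / 2 + 1 := by obtain ⟨m, rfl⟩ := hn; omega
  simp only [fP, gP, hrange]
  have hK : IsCompact (Dsq c l) := isCompact_Icc.prod isCompact_Icc
  rw [integral_finsetSum _ fun j _ => ContinuousOn.integrableOn_compact hK (by fun_prop),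
    cornerSum_sum]
  refine sum_congr rfl fun j hj => ?_
  have hj : 2 * j ≤ n := by rw [mem_range] at hj; omega
  have hprod := integral_Dsq_mul
    (fun u => (-1) ^ j / (n - 2 * j).factorial * (u - x.1) ^ (n - 2 * j))
    (fun v => (v - x.2) ^ (2 * j) / (2 * j).factorial) c hl
  simp only [intervalIntegral.integral_const_mul, intervalIntegral.integral_div,
    integral_sub_pow] at hprod
  calc _ = ∫ ξ in Dsq c l, (-1) ^ j / (n - 2 * j).factorial * (ξ.1 - x.1) ^ (n - 2 * j)
        * ((ξ.2 - x.2) ^ (2 * j) / (2 * j).factorial) := by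
        congr 1; ext ξ; ring
    _ = _ := by
      rw [hprod, cornerSum, show n + 2 - 2 * j - 1 = n - 2 * j + 1 by omega, Nat.factorial_succ,
        Nat.factorial_succ]
      push_cast
      field_simp
      ring

theorem Iavg_fP_eq_cornerSum_imPow (x : ℝ × ℝ) {l : ℝ} (hl : 0 ≤ l) {n : ℕ} (hn : Even n)
    (a b : ℝ) :
    Iavg (fP x n) (x.1 + a, x.2 + b) l
      = cornerSum (imPow (n + 2)) a b (l / 2) / (l ^ 2 * (n + 2).factorial) := by
  rw [Iavg, integral_Dsq_fP _ _ hl hn]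
  simp only [cornerSum, gP_eq_imPow x _ (by omega : 0 < n + 2)]
  ring_nf

def nbrOffsets (p : ℤ × ℤ) : Finset (ℤ × ℤ) :=
  {p.1, -p.1} ×ˢ {p.2, -p.2} ∪ {p.2, -p.2} ×ˢ {p.1, -p.1}

theorem abs_eq_intCast_mul_iff {a : ℤ} (ha : 0 ≤ a) {l : ℝ} (hl : 0 ≤ l) (d : ℝ) :
    |d| = a * l ↔ ∃ q ∈ ({a, -a} : Finset ℤ), q * l = d := by
  have : (0 : ℝ) ≤ a * l := mul_nonneg (by exact_mod_cast ha) hl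
  rw [abs_eq this]
  simp [eq_comm]

theorem setOf_isNbr (x : ℝ × ℝ) {l : ℝ} (hl : 0 ≤ l) {p : ℤ × ℤ} (hp1 : 0 ≤ p.1)
    (hp2 : 0 ≤ p.2) :
    {x' | isNbr p l x x'}
      = (fun q : ℤ × ℤ => (x.1 + q.1 * l, x.2 + q.2 * l)) '' (nbrOffsets p : Set (ℤ × ℤ)) := by
  ext x'
  simp only [Set.mem_ofPred_eq, isNbr, abs_eq_intCast_mul_iff hp1 hl,
    abs_eq_intCast_mul_iff hp2 hl, Set.mem_image, nbrOffsets, coe_union, coe_product,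
    Set.mem_union, Set.mem_prod, mem_coe, Prod.ext_iff, ← eq_sub_iff_add_eq']
  constructor
  · rintro (⟨⟨q₁, h₁, e₁⟩, ⟨q₂, h₂, e₂⟩⟩ | ⟨⟨q₁, h₁, e₁⟩, ⟨q₂, h₂, e₂⟩⟩)
    · exact ⟨(q₁, q₂), Or.inl ⟨h₁, h₂⟩, e₁, e₂⟩
    · exact ⟨(q₁, q₂), Or.inr ⟨h₁, h₂⟩, e₁, e₂⟩
  · rintro ⟨q, ⟨h₁, h₂⟩ | ⟨h₁, h₂⟩, e₁, e₂⟩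
    · exact Or.inl ⟨⟨q.1, h₁, e₁⟩, ⟨q.2, h₂, e₂⟩⟩
    · exact Or.inr ⟨⟨q.1, h₁, e₁⟩, ⟨q.2, h₂, e₂⟩⟩

theorem Ipavg_eq_sum_nbrOffsets (f : ℝ × ℝ → ℝ) (x : ℝ × ℝ) {l : ℝ} (hl : 0 < l)
    {p : ℤ × ℤ} (hp1 : 0 ≤ p.1) (hp2 : 0 ≤ p.2) :
    Ipavg f p x l = ∑ q ∈ nbrOffsets p, Iavg f (x.1 + q.1 * l, x.2 + q.2 * l) l := by
  rw [Ipavg, setOf_isNbr x hl.le hp1 hp2, finsum_mem_image, finsum_mem_coe_finset]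
  intro q _ q' _ h
  simp only [Prod.ext_iff, add_right_inj, mul_left_inj' hl.ne', Int.cast_inj] at h
  exact Prod.ext h.1 h.2

theorem card_nbrOffsets {p : ℤ × ℤ} (hp1 : 0 ≤ p.1) (hp2 : p.1 ≤ p.2) :
    ((nbrOffsets p).card : ℝ) = 8 * cP p := by
  obtain ⟨a, b⟩ := p
  simp only at hp1 hp2
  have hpair : ∀ c : ℤ, 0 < c → ({c, -c} : Finset ℤ).card = 2 := fun c hc => card_pair (by omega)
  rcases hp2.lt_or_eq with hab | rfl
  · have hdisj : Disjoint ({a, -a} ×ˢ {b, -b} : Finset (ℤ × ℤ)) ({b, -b} ×ˢ {a, -a}) := by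
      rw [disjoint_left]
      rintro ⟨q₁, q₂⟩ h h'
      simp only [mem_product, mem_insert, mem_singleton] at h h'
      omega
    rw [nbrOffsets, card_union_of_disjoint hdisj, card_product, card_product, hpair b (by omega)]
    rcases hp1.lt_or_eq with ha | rfl
    · norm_num [hpair a ha, cP, ha.ne', hab.ne]
    · norm_num [cP, hab.ne']
  · rw [nbrOffsets, union_self, card_product]
    rcases hp1.lt_or_eq with ha | rfl
    · norm_num [hpair a ha, cP, ha.ne']
    · norm_num [cP]

theorem cornerSum_imPow_of_mem_nbrOffsets {N : ℕ} (hN : N % 4 = 2) {p q : ℤ × ℤ}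
    (hq : q ∈ nbrOffsets p) (h : ℝ) :
    cornerSum (imPow N) (2 * q.1) (2 * q.2) h = cornerSum (imPow N) (2 * p.1) (2 * p.2) h := by
  have hN_even : Even N := Nat.even_iff.mpr (by omega)
  have habs : ∀ {a c : ℤ}, c ∈ ({a, -a} : Finset ℤ) → |2 * (c : ℝ)| = |2 * (a : ℝ)| := by
    intro a c hc
    rcases mem_insert.mp hc with rfl | hc
    · rfl
    · rw [mem_singleton.mp hc, Int.cast_neg, mul_neg, abs_neg]
  simp only [nbrOffsets, mem_union, mem_product] at hq
  rcases hq with ⟨h₁, h₂⟩ | ⟨h₁, h₂⟩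
  · exact cornerSum_congr_abs (imPow_neg_left hN_even) imPow_neg_right (habs h₁) (habs h₂)
  · rw [← cornerSum_swap (imPow_swap hN)]
    exact cornerSum_congr_abs (imPow_neg_left hN_even) imPow_neg_right (habs h₂) (habs h₁)

theorem Tc_eq_cornerSum_imPow (p : ℤ × ℤ) (k : ℕ) :
    Tc p k = 2 * cP p * cornerSum (imPow (4 * k + 2)) (2 * p.1) (2 * p.2) 1 := by
  simp only [Tc, cornerSum, imPow, sub_im, add_im]
  push_cast
  ring_nf

/-- for `n = 4k`, `I_p(f_n^x, x, l) = (1/(4k+2)!) ⬝ T_p^(k) ⬝ (l/2)^{4k}`. -/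
theorem stmt0 (x : ℝ × ℝ) (l : ℝ) (hl : 0 < l) (p : ℤ × ℤ)
    (hp1 : 0 ≤ p.1) (hp2 : p.1 ≤ p.2) (k : ℕ) :
    Ipavg (fP x (4 * k)) p x l =
      (1 / ((4 * k + 2).factorial : ℝ)) * Tc p k * (l / 2) ^ (4 * k) := by
  have hterm : ∀ q ∈ nbrOffsets p, Iavg (fP x (4 * k)) (x.1 + q.1 * l, x.2 + q.2 * l) l
      = (l / 2) ^ (4 * k + 2) * cornerSum (imPow (4 * k + 2)) (2 * p.1) (2 * p.2) 1
          / (l ^ 2 * (4 * k + 2).factorial) := by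
    intro q hq
    rw [Iavg_fP_eq_cornerSum_imPow x hl.le ⟨2 * k, by ring⟩,
      ← cornerSum_imPow_of_mem_nbrOffsets (by omega) hq, ← cornerSum_mul_mul imPow_mul_mul]
    ring_nf
  rw [Ipavg_eq_sum_nbrOffsets _ x hl hp1 (hp1.trans hp2), sum_congr rfl hterm, sum_const,
    nsmul_eq_mul, card_nbrOffsets hp1 hp2, Tc_eq_cornerSum_imPow]
  field_simp
  ring
end
end

section
/- Let x ∈ ℝ², l > 0, let p = (p₁,p₂) be an integer pair with 0 ≤ p₁ ≤ p₂, and let n ≥ 1 be an integer. Then I_p(g_n^x, x, l) = 0. -/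
open MeasureTheory Real Filter Topology

noncomputable section

private lemma gP_reflect (x : ℝ × ℝ) (n : ℕ) (ξ : ℝ × ℝ) :
    gP x n (ξ.1, 2 * x.2 - ξ.2) = - gP x n ξ := by
  unfold gP
  rw [← Finset.sum_neg_distrib]
  refine Finset.sum_congr rfl fun j _ => ?_
  have h : 2 * x.2 - ξ.2 - x.2 = -(ξ.2 - x.2) := by ring
  rw [h, Odd.neg_pow (odd_two_mul_add_one j)]
  ring

private lemma Iavg_reflect (x : ℝ × ℝ) (n : ℕ) (l : ℝ) (a : ℝ × ℝ) :
    Iavg (gP x n) (a.1, 2 * x.2 - a.2) l = - Iavg (gP x n) a l := by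
  have hTm : MeasurePreserving (fun ξ : ℝ × ℝ => (ξ.1, 2 * x.2 - ξ.2)) volume volume := by
    rw [MeasureTheory.Measure.volume_eq_prod]
    exact (MeasurePreserving.id volume).prod
      (MeasureTheory.Measure.measurePreserving_sub_left volume (2 * x.2))
  have hinv : ∀ ξ : ℝ × ℝ, ((fun ξ : ℝ × ℝ => (ξ.1, 2 * x.2 - ξ.2))
      ((fun ξ : ℝ × ℝ => (ξ.1, 2 * x.2 - ξ.2)) ξ)) = ξ := by
    intro ξ
    have h2 : 2 * x.2 - (2 * x.2 - ξ.2) = ξ.2 := by ring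
    exact Prod.ext rfl h2
  have hTc : Continuous (fun ξ : ℝ × ℝ => (ξ.1, 2 * x.2 - ξ.2)) := by fun_prop
  let e : (ℝ × ℝ) ≃ₜ (ℝ × ℝ) := ⟨⟨fun ξ => (ξ.1, 2 * x.2 - ξ.2),
    fun ξ => (ξ.1, 2 * x.2 - ξ.2), hinv, hinv⟩, hTc, hTc⟩
  have hemb : MeasurableEmbedding (fun ξ : ℝ × ℝ => (ξ.1, 2 * x.2 - ξ.2)) :=
    e.measurableEmbedding
  have himg : (fun ξ : ℝ × ℝ => (ξ.1, 2 * x.2 - ξ.2)) '' Dsq a l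
      = Dsq (a.1, 2 * x.2 - a.2) l := by
    ext b
    simp only [Dsq, Set.mem_image, Set.mem_prod, Set.mem_Icc, Prod.exists]
    constructor
    · rintro ⟨c1, c2, ⟨⟨u1, u2⟩, v1, v2⟩, rfl⟩
      refine ⟨⟨?_, ?_⟩, ?_, ?_⟩ <;> (try dsimp) <;> linarith
    · rintro ⟨⟨u1, u2⟩, v1, v2⟩
      try dsimp at u1 u2 v1 v2
      refine ⟨b.1, 2 * x.2 - b.2, ⟨⟨by linarith, by linarith⟩, by linarith, by linarith⟩,
        Prod.ext rfl (by dsimp; ring)⟩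
  have key : ∫ ξ in Dsq (a.1, 2 * x.2 - a.2) l, gP x n ξ
      = - ∫ ξ in Dsq a l, gP x n ξ := by
    rw [← himg, hTm.setIntegral_image_emb hemb]
    simp only [gP_reflect]
    exact MeasureTheory.integral_neg _
  unfold Iavg
  rw [key]; ring

/-- for every `n ≥ 1`, `I_p(g_n^x, x, l) = 0`. -/
theorem stmt2 (x : ℝ × ℝ) (l : ℝ) (hl : 0 < l) (p : ℤ × ℤ)
    (hp1 : 0 ≤ p.1) (hp2 : p.1 ≤ p.2) (n : ℕ) (hn : 1 ≤ n) :
    Ipavg (gP x n) p x l = 0 := by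
  classical
  have h01 : (0:ℝ) ≤ (p.1 : ℝ) * l := mul_nonneg (by exact_mod_cast hp1) hl.le
  have h02 : (0:ℝ) ≤ (p.2 : ℝ) * l :=
    mul_nonneg (by exact_mod_cast hp1.trans hp2) hl.le
  set f : ℝ × ℝ → ℝ := fun x' => Iavg (gP x n) x' l with hfdef
  set s : Set (ℝ × ℝ) := {x' | isNbr p l x x'} with hsdef
  have hfin : (s ∩ Function.support f).Finite := by
    have hA : ({x.1 - (p.1:ℝ)*l, x.1 + (p.1:ℝ)*l, x.1 - (p.2:ℝ)*l, x.1 + (p.2:ℝ)*l}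
        : Set ℝ).Finite :=
      ((((Set.finite_singleton _).insert _).insert _).insert _)
    have hB : ({x.2 - (p.1:ℝ)*l, x.2 + (p.1:ℝ)*l, x.2 - (p.2:ℝ)*l, x.2 + (p.2:ℝ)*l}
        : Set ℝ).Finite :=
      ((((Set.finite_singleton _).insert _).insert _).insert _)
    refine Set.Finite.subset (hA.prod hB) ?_
    rintro a ⟨ha, -⟩
    simp only [Set.mem_prod, Set.mem_insert_iff, Set.mem_singleton_iff]
    rcases ha with ⟨h1, h2⟩ | ⟨h1, h2⟩
    · rcases (abs_eq h01).1 h1 with h | h <;> rcases (abs_eq h02).1 h2 with h' | h' <;>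
        constructor <;> first
          | (left; linarith)
          | (right; left; linarith)
          | (right; right; left; linarith)
          | (right; right; right; linarith)
    · rcases (abs_eq h02).1 h1 with h | h <;> rcases (abs_eq h01).1 h2 with h' | h' <;>
        constructor <;> first
          | (left; linarith)
          | (right; left; linarith)
          | (right; right; left; linarith)
          | (right; right; right; linarith)
  have hIp : Ipavg (gP x n) p x l = ∑ᶠ x' ∈ s, f x' := rfl
  rw [hIp, finsum_mem_eq_sum _ hfin]
  have hrefl : ∀ a : ℝ × ℝ, f (a.1, 2 * x.2 - a.2) = - f a := fun a =>
    Iavg_reflect x n l a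
  have hσs : ∀ a : ℝ × ℝ, a ∈ s → (a.1, 2 * x.2 - a.2) ∈ s := by
    intro a ha
    have habs : |2 * x.2 - a.2 - x.2| = |a.2 - x.2| := by
      rw [show 2 * x.2 - a.2 - x.2 = -(a.2 - x.2) by ring, abs_neg]
    rcases ha with ⟨h1, h2⟩ | ⟨h1, h2⟩
    · exact Or.inl ⟨h1, by rw [habs]; exact h2⟩
    · exact Or.inr ⟨h1, by rw [habs]; exact h2⟩
  refine Finset.sum_involution (fun a _ => (a.1, 2 * x.2 - a.2)) ?_ ?_ ?_ ?_
  · intro a ha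
    show f a + f (a.1, 2 * x.2 - a.2) = 0
    rw [hrefl a]; ring
  · intro a ha hfa hc
    apply hfa
    have hc' : ((a.1, 2 * x.2 - a.2) : ℝ × ℝ) = a := hc
    have := hrefl a
    rw [hc'] at this
    linarith
  · intro a ha
    simp only [Set.Finite.mem_toFinset] at ha ⊢
    refine ⟨hσs a ha.1, ?_⟩
    have hfa : f a ≠ 0 := ha.2
    show f (a.1, 2 * x.2 - a.2) ≠ 0
    rw [hrefl a]
    simpa using hfa
  · intro a ha
    show ((a.1, 2 * x.2 - (2 * x.2 - a.2)) : ℝ × ℝ) = a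
    exact Prod.ext rfl (by dsimp; ring)
end
end

section
/- Let p = (p₁,p₂) be an integer pair with 0 ≤ p₁ ≤ p₂, let Ω ⊆ ℝ² be open, let f be twice continuously differentiable on Ω, and let x ∈ Ω. Then lim_{l→0⁺} (1/l²) · Σ_{D(x',l) ∼_p D(x,l)} ( I(f,x',l) − I(f,x,l) ) = 2 (p₁² + p₂²) c_p Δf(x), where Δf = ∂²f/∂ξ₁² + ∂²f/∂ξ₂². -/
open MeasureTheory Real Filter Topology

noncomputable section

/-! Write the `p`-neighbours of `D(x, l)` as `D(x + l • v, l)` with `v` in the finite set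
`nbrSet p` of offsets. Then `I(f, x + l • v, l) - I(f, x, l)` is the average over `D(x, l)` of
`ξ ↦ f (ξ + l • v) - f ξ`. Expanding to second order around each `ξ`, with the Hessian frozen
at `x`, the first-order terms cancel after summing over `v` because the offsets sum to zero,
so the sum is `l² / 2 · ∑ᵥ D²f(x)(v, v) + o(l²)` uniformly on the square. The offsets are
invariant under swapping and under reflecting a coordinate, so the mixed terms vanish and
`∑ᵥ D²f(x)(v, v) = Δf(x) / 2 · (p₁² + p₂²) · #(nbrSet p)`, where `#(nbrSet p) = 8 c_p`. -/

open Finset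

theorem abs_sub_taylor_two_le {E : Type*} [NormedAddCommGroup E] [NormedSpace ℝ E]
    {f : E → ℝ} {f' : E → E →L[ℝ] ℝ} {f'' : E → E →L[ℝ] E →L[ℝ] ℝ} {s : Set E}
    (hs : Convex ℝ s) (hf : ∀ y ∈ s, HasFDerivWithinAt f (f' y) s y)
    (hf' : ∀ y ∈ s, HasFDerivWithinAt f' (f'' y) s y)
    {A : E →L[ℝ] E →L[ℝ] ℝ} {ε : ℝ} (hA : ∀ y ∈ s, ‖f'' y - A‖ ≤ ε)
    {ξ h : E} (hξ : ξ ∈ s) (hξh : ξ + h ∈ s) :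
    |f (ξ + h) - f ξ - f' ξ h - 2⁻¹ * A h h| ≤ ε * ‖h‖ ^ 2 := by
  have hseg : Set.MapsTo (fun t : ℝ => ξ + t • h) (Set.Icc 0 1) s :=
    fun t ht => hs.add_smul_mem hξ hξh ht
  have hε : 0 ≤ ε := (norm_nonneg (f'' ξ - A)).trans (hA ξ hξ)
  set g : ℝ → ℝ := fun t => f (ξ + t • h) - t * f' ξ h - t ^ 2 / 2 * A h h
  have hg : ∀ t ∈ Set.Icc (0 : ℝ) 1, HasDerivWithinAt g
      ((f' (ξ + t • h) - f' ξ - A (t • h)) h) (Set.Icc 0 1) t := by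
    intro t ht
    have hpath : HasDerivWithinAt (fun t : ℝ => ξ + t • h) h (Set.Icc 0 1) t := by
      simpa using ((hasDerivWithinAt_id t _).smul_const h).const_add ξ
    have := (((hf _ (hseg ht)).comp_hasDerivWithinAt t hpath hseg).sub
      ((hasDerivWithinAt_id t _).mul_const (f' ξ h))).sub
      (((hasDerivWithinAt_id t _).pow 2).div_const 2 |>.mul_const (A h h))
    refine this.congr_deriv ?_
    simp [map_smul]
  have hg' : ∀ t ∈ Set.Icc (0 : ℝ) 1, ‖(f' (ξ + t • h) - f' ξ - A (t • h)) h‖ ≤ ε * ‖h‖ ^ 2 := by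
    intro t ht
    have hlin := hs.norm_image_sub_le_of_norm_hasFDerivWithin_le' hf' hA hξ (hseg ht)
    rw [add_sub_cancel_left, norm_smul, Real.norm_of_nonneg ht.1] at hlin
    calc ‖(f' (ξ + t • h) - f' ξ - A (t • h)) h‖
        ≤ ‖f' (ξ + t • h) - f' ξ - A (t • h)‖ * ‖h‖ := ContinuousLinearMap.le_opNorm _ _
      _ ≤ ε * (1 * ‖h‖) * ‖h‖ := by gcongr; exact hlin.trans (by gcongr; exact ht.2)
      _ = ε * ‖h‖ ^ 2 := by ring
  have := Convex.norm_image_sub_le_of_norm_hasDerivWithin_le hg hg' (convex_Icc 0 1)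
    (Set.left_mem_Icc.2 zero_le_one) (Set.right_mem_Icc.2 zero_le_one)
  have hg01 : g 1 - g 0 = f (ξ + h) - f ξ - f' ξ h - 2⁻¹ * A h h := by simp [g]; ring
  simpa [hg01] using this

theorem exists_ball_abs_sub_taylor_two_le {E : Type*} [NormedAddCommGroup E] [NormedSpace ℝ E]
    {Ω : Set E} (hΩ : IsOpen Ω) {f : E → ℝ} (hf : ContDiffOn ℝ 2 f Ω) {x : E} (hx : x ∈ Ω)
    {ε : ℝ} (hε : 0 < ε) :
    ∃ r > 0, Metric.ball x r ⊆ Ω ∧ ∀ ξ ∈ Metric.ball x r, ∀ h, ξ + h ∈ Metric.ball x r →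
      |f (ξ + h) - f ξ - fderiv ℝ f ξ h - 2⁻¹ * fderiv ℝ (fderiv ℝ f) x h h| ≤ ε * ‖h‖ ^ 2 := by
  have hf' : ContDiffOn ℝ 1 (fderiv ℝ f) Ω := hf.fderiv_of_isOpen hΩ (by norm_num)
  have hf'' : ContinuousAt (fderiv ℝ (fderiv ℝ f)) x :=
    (hf'.fderiv_of_isOpen (m := 0) hΩ le_rfl).continuousOn.continuousAt (hΩ.mem_nhds hx)
  have hnear : ∀ᶠ y in 𝓝 x, y ∈ Ω ∧
      dist (fderiv ℝ (fderiv ℝ f) y) (fderiv ℝ (fderiv ℝ f) x) < ε :=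
    (hΩ.eventually_mem hx).and (Metric.continuousAt_iff'.1 hf'' ε hε)
  obtain ⟨r, hr, hball⟩ := Metric.eventually_nhds_iff_ball.1 hnear
  refine ⟨r, hr, fun y hy => (hball y hy).1, fun ξ hξ h hξh => ?_⟩
  exact abs_sub_taylor_two_le (convex_ball x r)
    (fun y hy => ((hf.differentiableOn (by norm_num)).differentiableAt
      (hΩ.mem_nhds (hball y hy).1)).hasFDerivAt.hasFDerivWithinAt)
    (fun y hy => ((hf'.differentiableOn one_ne_zero).differentiableAt
      (hΩ.mem_nhds (hball y hy).1)).hasFDerivAt.hasFDerivWithinAt)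
    (fun y hy => ((dist_eq_norm (fderiv ℝ (fderiv ℝ f) y) _).symm.trans_lt (hball y hy).2).le)
    hξ hξh

theorem abs_inv_sq_mul_sum_sub_le {E : Type*} [NormedAddCommGroup E] [NormedSpace ℝ E]
    {V : Finset E} (hV : ∑ v ∈ V, v = 0) (L : E →L[ℝ] ℝ) (A : E →L[ℝ] E →L[ℝ] ℝ) {φ : E → ℝ}
    {l ε : ℝ} (hl : l ≠ 0)
    (hφ : ∀ v ∈ V, |φ (l • v) - L (l • v) - 2⁻¹ * A (l • v) (l • v)| ≤ ε * ‖l • v‖ ^ 2) :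
    |1 / l ^ 2 * ∑ v ∈ V, φ (l • v) - 2⁻¹ * ∑ v ∈ V, A v v| ≤ ε * ∑ v ∈ V, ‖v‖ ^ 2 := by
  have hL : ∑ v ∈ V, L (l • v) = 0 := by rw [← map_sum, ← smul_sum, hV, smul_zero, map_zero]
  have hA : ∀ v, A (l • v) (l • v) = l ^ 2 * A v v := fun v => by simp [map_smul]; ring
  have hrem : 1 / l ^ 2 * ∑ v ∈ V, φ (l • v) - 2⁻¹ * ∑ v ∈ V, A v v =
      1 / l ^ 2 * ∑ v ∈ V, (φ (l • v) - L (l • v) - 2⁻¹ * A (l • v) (l • v)) := by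
    simp only [sum_sub_distrib, hL, hA, ← mul_sum]
    field_simp
    ring
  rw [hrem, abs_mul, abs_of_pos (by positivity)]
  calc 1 / l ^ 2 * |∑ v ∈ V, (φ (l • v) - L (l • v) - 2⁻¹ * A (l • v) (l • v))|
      ≤ 1 / l ^ 2 * ∑ v ∈ V, ε * ‖l • v‖ ^ 2 := by
        gcongr
        exact (abs_sum_le_sum_abs _ _).trans (sum_le_sum hφ)
    _ = ε * ∑ v ∈ V, ‖v‖ ^ 2 := by
        simp only [norm_smul, mul_pow, Real.norm_eq_abs, sq_abs, ← mul_sum]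
        field_simp

theorem Dsq_eq_closedBall (x : ℝ × ℝ) (l : ℝ) : Dsq x l = Metric.closedBall x (l / 2) := by
  rw [Dsq, ← closedBall_prod_same, Real.closedBall_eq_Icc, Real.closedBall_eq_Icc]

theorem isCompact_Dsq (x : ℝ × ℝ) (l : ℝ) : IsCompact (Dsq x l) :=
  isCompact_Icc.prod isCompact_Icc

theorem add_smul_mem_ball_of_mem_Dsq {x ξ v : ℝ × ℝ} {l r : ℝ} (hl : 0 ≤ l) (hξ : ξ ∈ Dsq x l)
    (hlr : l * (1 + ‖v‖) < r) : ξ + l • v ∈ Metric.ball x r := by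
  rw [Dsq_eq_closedBall, Metric.mem_closedBall, dist_eq_norm] at hξ
  rw [Metric.mem_ball, dist_eq_norm, add_sub_right_comm]
  calc ‖ξ - x + l • v‖ ≤ ‖ξ - x‖ + ‖l • v‖ := norm_add_le _ _
    _ = ‖ξ - x‖ + l * ‖v‖ := by rw [norm_smul, Real.norm_of_nonneg hl]
    _ < r := by nlinarith

theorem measureReal_Dsq (x : ℝ × ℝ) {l : ℝ} (hl : 0 ≤ l) : volume.real (Dsq x l) = l ^ 2 := by
  rw [Dsq, Measure.volume_eq_prod, measureReal_prod_prod, Real.volume_real_Icc_of_le (by linarith),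
    Real.volume_real_Icc_of_le (by linarith)]
  ring

theorem Iavg_comp_add_right (f : ℝ × ℝ → ℝ) (x w : ℝ × ℝ) (l : ℝ) :
    Iavg (fun ξ => f (ξ + w)) x l = Iavg f (x + w) l := by
  have hpre : (· + w) ⁻¹' Dsq (x + w) l = Dsq x l := by
    rw [Dsq_eq_closedBall, Dsq_eq_closedBall, Metric.preimage_add_right_closedBall,
      add_sub_cancel_right]
  rw [Iavg, Iavg, ← hpre, (measurePreserving_add_right volume w).setIntegral_preimage_emb
    (MeasurableEquiv.addRight w).measurableEmbedding]

theorem Iavg_const_mul (c : ℝ) (g : ℝ × ℝ → ℝ) (x : ℝ × ℝ) (l : ℝ) :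
    Iavg (fun ξ => c * g ξ) x l = c * Iavg g x l := by
  rw [Iavg, Iavg, integral_const_mul, mul_left_comm]

theorem sum_Iavg_sub_eq {ι : Type*} (s : Finset ι) {f : ℝ × ℝ → ℝ} {x : ℝ × ℝ} {l : ℝ}
    (w : ι → ℝ × ℝ) (hf : IntegrableOn f (Dsq x l))
    (hfw : ∀ i ∈ s, IntegrableOn (fun ξ => f (ξ + w i)) (Dsq x l)) :
    ∑ i ∈ s, (Iavg f (x + w i) l - Iavg f x l) =
      Iavg (fun ξ => ∑ i ∈ s, (f (ξ + w i) - f ξ)) x l := by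
  calc ∑ i ∈ s, (Iavg f (x + w i) l - Iavg f x l)
      = ∑ i ∈ s, 1 / l ^ 2 * ∫ ξ in Dsq x l, (f (ξ + w i) - f ξ) := sum_congr rfl fun i hi => by
        rw [← Iavg_comp_add_right, Iavg, Iavg, ← mul_sub, integral_sub (hfw i hi) hf]
    _ = Iavg (fun ξ => ∑ i ∈ s, (f (ξ + w i) - f ξ)) x l := by
        rw [Iavg, ← mul_sum, integral_finsetSum s (f := fun i ξ => f (ξ + w i) - f ξ)
          fun i hi => (hfw i hi).sub hf]

theorem abs_Iavg_sub_le {g : ℝ × ℝ → ℝ} {x : ℝ × ℝ} {l c M : ℝ} (hl : 0 < l)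
    (hg : IntegrableOn g (Dsq x l)) (hM : ∀ ξ ∈ Dsq x l, |g ξ - c| ≤ M) :
    |Iavg g x l - c| ≤ M := by
  have hvol : volume (Dsq x l) < ⊤ := (isCompact_Dsq x l).measure_lt_top
  have hc : Iavg g x l - c = (1 / l ^ 2) * ∫ ξ in Dsq x l, (g ξ - c) := by
    rw [Iavg, integral_sub hg (integrableOn_const hvol.ne), setIntegral_const,
      measureReal_Dsq x hl.le, smul_eq_mul]
    field_simp
  have := norm_setIntegral_le_of_norm_le_const hvol
    fun ξ hξ => (Real.norm_eq_abs (g ξ - c)).trans_le (hM ξ hξ)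
  rw [measureReal_Dsq x hl.le, Real.norm_eq_abs] at this
  rw [hc, abs_mul, abs_of_pos (by positivity)]
  calc 1 / l ^ 2 * |∫ ξ in Dsq x l, (g ξ - c)| ≤ 1 / l ^ 2 * (M * l ^ 2) := by gcongr
    _ = M := by field_simp

theorem tendsto_inv_sq_mul_sum_Iavg_sub {Ω : Set (ℝ × ℝ)} (hΩ : IsOpen Ω) {f : ℝ × ℝ → ℝ}
    (hf : ContDiffOn ℝ 2 f Ω) {x : ℝ × ℝ} (hx : x ∈ Ω) {V : Finset (ℝ × ℝ)}
    (hV : ∑ v ∈ V, v = 0) :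
    Tendsto (fun l => 1 / l ^ 2 * ∑ v ∈ V, (Iavg f (x + l • v) l - Iavg f x l)) (𝓝[>] 0)
      (𝓝 (2⁻¹ * ∑ v ∈ V, fderiv ℝ (fderiv ℝ f) x v v)) := by
  rw [Metric.tendsto_nhds]
  intro ε hε
  set S := ∑ v ∈ V, ‖v‖ ^ 2
  have hS : 0 ≤ S := sum_nonneg fun v _ => by positivity
  obtain ⟨r, hr, hrΩ, htaylor⟩ :=
    exists_ball_abs_sub_taylor_two_le hΩ hf hx (ε := ε / (2 * (1 + S))) (by positivity)
  set M := ∑ v ∈ V, ‖v‖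
  have hM : 0 ≤ M := sum_nonneg fun v _ => norm_nonneg v
  have hVM : ∀ v ∈ V, ‖v‖ ≤ M := fun v hv => single_le_sum (fun v _ => norm_nonneg v) hv
  filter_upwards [Ioo_mem_nhdsGT (show 0 < r / (1 + M) by positivity)] with l ⟨hl, hlr⟩
  rw [lt_div_iff₀ (by positivity)] at hlr
  have hball : ∀ v : ℝ × ℝ, ‖v‖ ≤ M → ∀ ξ ∈ Dsq x l, ξ + l • v ∈ Metric.ball x r :=
    fun v hv ξ hξ => add_smul_mem_ball_of_mem_Dsq hl.le hξ
      ((mul_le_mul_of_nonneg_left (by linarith) hl.le).trans_lt hlr)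
  have hint : ∀ v : ℝ × ℝ, ‖v‖ ≤ M → IntegrableOn (fun ξ => f (ξ + l • v)) (Dsq x l) :=
    fun v hv => (hf.continuousOn.comp (continuous_add_const _).continuousOn
      fun ξ hξ => hrΩ (hball v hv ξ hξ)).integrableOn_compact (isCompact_Dsq x l)
  have hint0 : IntegrableOn f (Dsq x l) := by simpa using hint 0 (by simpa using hM)
  have hintV : ∀ v ∈ V, IntegrableOn (fun ξ => f (ξ + l • v)) (Dsq x l) :=
    fun v hv => hint v (hVM v hv)
  have hpointwise : ∀ ξ ∈ Dsq x l, |1 / l ^ 2 * ∑ v ∈ V, (f (ξ + l • v) - f ξ)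
      - 2⁻¹ * ∑ v ∈ V, fderiv ℝ (fderiv ℝ f) x v v| ≤ ε / (2 * (1 + S)) * S := by
    intro ξ hξ
    have hξr : ξ ∈ Metric.ball x r := by simpa using hball 0 (by simpa using hM) ξ hξ
    exact abs_inv_sq_mul_sum_sub_le hV (fderiv ℝ f ξ) _ (φ := fun h => f (ξ + h) - f ξ) hl.ne'
      fun v hv => htaylor ξ hξr _ (hball v (hVM v hv) ξ hξ)
  have hGint : IntegrableOn (fun ξ => 1 / l ^ 2 * ∑ v ∈ V, (f (ξ + l • v) - f ξ)) (Dsq x l) :=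
    (integrable_finsetSum V fun v hv => (hintV v hv).sub hint0).const_mul _
  rw [Real.dist_eq, sum_Iavg_sub_eq V (l • ·) hint0 hintV, ← Iavg_const_mul]
  refine (abs_Iavg_sub_le hl hGint hpointwise).trans_lt ?_
  rw [div_mul_eq_mul_div, div_lt_iff₀ (by positivity)]
  nlinarith

theorem sum_apply_self_of_symmetric {S : Finset (ℝ × ℝ)} (hswap : ∀ v ∈ S, v.swap ∈ S)
    (hrefl : ∀ v ∈ S, (-v.1, v.2) ∈ S) (A : ℝ × ℝ →L[ℝ] ℝ × ℝ →L[ℝ] ℝ) :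
    ∑ v ∈ S, A v v = (A (1, 0) (1, 0) + A (0, 1) (0, 1)) / 2 * ∑ v ∈ S, (v.1 ^ 2 + v.2 ^ 2) := by
  have hexpand : ∀ v : ℝ × ℝ, A v v = v.1 ^ 2 * A (1, 0) (1, 0)
      + v.1 * v.2 * (A (1, 0) (0, 1) + A (0, 1) (1, 0)) + v.2 ^ 2 * A (0, 1) (0, 1) := by
    rintro ⟨a, b⟩
    have hv : ((a, b) : ℝ × ℝ) = a • ((1, 0) : ℝ × ℝ) + b • ((0, 1) : ℝ × ℝ) := by simp
    conv_lhs => rw [hv]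
    simp only [map_add, map_smul, add_apply, smul_apply, smul_eq_mul]
    ring
  have hmixed : ∑ v ∈ S, v.1 * v.2 = 0 := by
    have : ∑ v ∈ S, v.1 * v.2 = ∑ v ∈ S, -(v.1 * v.2) :=
      sum_nbij' (fun v => (-v.1, v.2)) (fun v => (-v.1, v.2)) hrefl hrefl (by simp) (by simp)
        (by simp)
    rw [sum_neg_distrib] at this
    linarith
  have hsq : ∑ v ∈ S, v.1 ^ 2 = ∑ v ∈ S, v.2 ^ 2 :=
    sum_nbij' Prod.swap Prod.swap hswap hswap (fun v _ => v.swap_swap) (fun v _ => v.swap_swap)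
      fun _ _ => rfl
  rw [sum_congr rfl fun v _ => hexpand v]
  simp only [sum_add_distrib, ← sum_mul, hmixed, hsq]
  ring

theorem sum_eq_zero_of_neg_mem {M : Type*} [AddCommGroup M] [IsAddTorsionFree M]
    {S : Finset M} (hneg : ∀ v ∈ S, -v ∈ S) :
    ∑ v ∈ S, v = 0 := by
  have : ∑ v ∈ S, v = ∑ v ∈ S, -v :=
    sum_nbij' (- ·) (- ·) hneg hneg (fun v _ => neg_neg v) (fun v _ => neg_neg v)
      fun v _ => (neg_neg v).symm
  rwa [sum_neg_distrib, self_eq_neg] at this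

/-- The offsets `(x' - x) / l` of the centres of the `p`-neighbours of `D(x, l)`. -/
def nbrSet (p : ℤ × ℤ) : Finset (ℝ × ℝ) :=
  {(p.1 : ℝ), -(p.1 : ℝ)} ×ˢ {(p.2 : ℝ), -(p.2 : ℝ)} ∪
    {(p.2 : ℝ), -(p.2 : ℝ)} ×ˢ {(p.1 : ℝ), -(p.1 : ℝ)}

theorem mem_nbrSet {p : ℤ × ℤ} (hp1 : 0 ≤ p.1) (hp2 : 0 ≤ p.2) {v : ℝ × ℝ} :
    v ∈ nbrSet p ↔ (|v.1| = p.1 ∧ |v.2| = p.2) ∨ (|v.1| = p.2 ∧ |v.2| = p.1) := by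
  have h1 : (0 : ℝ) ≤ p.1 := by exact_mod_cast hp1
  have h2 : (0 : ℝ) ≤ p.2 := by exact_mod_cast hp2
  simp only [nbrSet, mem_union, mem_product, mem_insert, mem_singleton, abs_eq h1, abs_eq h2]

theorem isNbr_add_smul_iff {p : ℤ × ℤ} (hp1 : 0 ≤ p.1) (hp2 : 0 ≤ p.2) {l : ℝ} (hl : 0 < l)
    (x v : ℝ × ℝ) : isNbr p l x (x + l • v) ↔ v ∈ nbrSet p := by
  simp only [isNbr, mem_nbrSet hp1 hp2, Prod.fst_add, Prod.snd_add, Prod.smul_fst, Prod.smul_snd,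
    add_sub_cancel_left, smul_eq_mul, abs_mul, abs_of_pos hl, mul_comm l, mul_left_inj' hl.ne']

theorem setOf_isNbr_eq_image {p : ℤ × ℤ} (hp1 : 0 ≤ p.1) (hp2 : 0 ≤ p.2) {l : ℝ} (hl : 0 < l)
    (x : ℝ × ℝ) : {x' | isNbr p l x x'} = (nbrSet p).image (x + l • ·) := by
  ext x'
  simp only [coe_image, Set.mem_image, mem_coe]
  constructor
  · intro h
    have hx' : x + l • l⁻¹ • (x' - x) = x' := by rw [smul_inv_smul₀ hl.ne', add_sub_cancel]
    exact ⟨_, (isNbr_add_smul_iff hp1 hp2 hl x _).1 (by rwa [hx']), hx'⟩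
  · rintro ⟨v, hv, rfl⟩
    exact (isNbr_add_smul_iff hp1 hp2 hl _ _).2 hv

theorem finsum_isNbr_eq_sum {p : ℤ × ℤ} (hp1 : 0 ≤ p.1) (hp2 : 0 ≤ p.2) {l : ℝ} (hl : 0 < l)
    (x : ℝ × ℝ) (g : ℝ × ℝ → ℝ) :
    ∑ᶠ x' ∈ {x' : ℝ × ℝ | isNbr p l x x'}, g x' = ∑ v ∈ nbrSet p, g (x + l • v) := by
  rw [setOf_isNbr_eq_image hp1 hp2 hl, finsum_mem_coe_finset,
    sum_image fun v _ w _ h => smul_right_injective _ hl.ne' (add_left_cancel h)]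

theorem card_nbrSet {p : ℤ × ℤ} (hp1 : 0 ≤ p.1) (hp2 : p.1 ≤ p.2) :
    ((nbrSet p).card : ℝ) = 8 * cP p := by
  have hpair : ∀ a : ℤ, a ≠ 0 → #{(a : ℝ), -(a : ℝ)} = 2 := fun a ha =>
    card_pair fun h => ha (by exact_mod_cast (show (a : ℝ) = 0 by linarith))
  rcases hp2.eq_or_lt with h12 | h12
  · rw [nbrSet, ← h12, union_self, card_product]
    rcases hp1.eq_or_lt with h0 | h0
    · simp [cP, ← h0, ← h12]
    · rw [hpair p.1 h0.ne', cP, if_neg (by omega), if_pos (Or.inr h12)]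
      norm_num
  · have h1 : (0 : ℝ) ≤ p.1 := by exact_mod_cast hp1
    have h12' : (p.1 : ℝ) < p.2 := by exact_mod_cast h12
    have hdisj : Disjoint ({(p.1 : ℝ), -(p.1 : ℝ)} : Finset ℝ) {(p.2 : ℝ), -(p.2 : ℝ)} := by
      refine disjoint_left.2 ?_
      simp only [mem_insert, mem_singleton]
      rintro a (rfl | rfl) (h | h) <;> linarith
    rw [nbrSet, card_union_of_disjoint (disjoint_product.2 (Or.inl hdisj)), card_product,
      card_product, hpair p.2 (by omega)]
    rcases hp1.eq_or_lt with h0 | h0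
    · simp [cP, ← h0, (h0 ▸ h12).ne']
      norm_num
    · rw [hpair p.1 h0.ne', cP, if_neg (by omega), if_neg (by omega)]
      norm_num

theorem sum_nbrSet_eq_zero {p : ℤ × ℤ} (hp1 : 0 ≤ p.1) (hp2 : 0 ≤ p.2) : ∑ v ∈ nbrSet p, v = 0 :=
  sum_eq_zero_of_neg_mem fun v hv => by
    rw [mem_nbrSet hp1 hp2] at hv ⊢
    simpa only [Prod.fst_neg, Prod.snd_neg, abs_neg] using hv

theorem sum_nbrSet_apply_self {p : ℤ × ℤ} (hp1 : 0 ≤ p.1) (hp2 : p.1 ≤ p.2)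
    (A : ℝ × ℝ →L[ℝ] ℝ × ℝ →L[ℝ] ℝ) :
    ∑ v ∈ nbrSet p, A v v =
      4 * ((p.1 : ℝ) ^ 2 + (p.2 : ℝ) ^ 2) * cP p * (A (1, 0) (1, 0) + A (0, 1) (0, 1)) := by
  have hp2' : 0 ≤ p.2 := hp1.trans hp2
  have hnorm : ∀ v ∈ nbrSet p, v.1 ^ 2 + v.2 ^ 2 = (p.1 : ℝ) ^ 2 + (p.2 : ℝ) ^ 2 := by
    intro v hv
    rcases (mem_nbrSet hp1 hp2').1 hv with ⟨h1, h2⟩ | ⟨h1, h2⟩ <;>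
      rw [← sq_abs v.1, ← sq_abs v.2, h1, h2]
    ring
  rw [sum_apply_self_of_symmetric (fun v hv => ?_) (fun v hv => ?_), sum_congr rfl hnorm,
    sum_const, nsmul_eq_mul, card_nbrSet hp1 hp2]
  · ring
  all_goals
    rw [mem_nbrSet hp1 hp2'] at hv ⊢
    simp only [Prod.fst_swap, Prod.snd_swap, abs_neg]
    tauto

theorem pd1_pd1_add_pd2_pd2 {f : ℝ × ℝ → ℝ} {x : ℝ × ℝ}
    (hf : DifferentiableAt ℝ (fderiv ℝ f) x) :
    pd1 (pd1 f) x + pd2 (pd2 f) x =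
      fderiv ℝ (fderiv ℝ f) x (1, 0) (1, 0) + fderiv ℝ (fderiv ℝ f) x (0, 1) (0, 1) := by
  have hpartial : ∀ w : ℝ × ℝ,
      fderiv ℝ (fun y => fderiv ℝ f y w) x w = fderiv ℝ (fderiv ℝ f) x w w := fun w => by
    rw [fderiv_clm_apply hf (differentiableAt_const w)]
    simp
  exact congrArg₂ (· + ·) (hpartial (1, 0)) (hpartial (0, 1))

/-- sum of differences over `p`-neighbors recovers `2‖p‖²c_p Δf(x)`. -/
theorem stmt15 (p : ℤ × ℤ) (hp1 : 0 ≤ p.1) (hp2 : p.1 ≤ p.2)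
    (Ω : Set (ℝ × ℝ)) (hΩ : IsOpen Ω) (f : ℝ × ℝ → ℝ) (hf : ContDiffOn ℝ 2 f Ω)
    (x : ℝ × ℝ) (hx : x ∈ Ω) :
    Filter.Tendsto
      (fun l : ℝ => (1 / l ^ 2) *
        ∑ᶠ x' ∈ {x' : ℝ × ℝ | isNbr p l x x'}, (Iavg f x' l - Iavg f x l))
      (𝓝[>] (0 : ℝ))
      (𝓝 (2 * ((p.1 : ℝ) ^ 2 + (p.2 : ℝ) ^ 2) * cP p *
        (pd1 (pd1 f) x + pd2 (pd2 f) x))) := by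
  have hp2' : 0 ≤ p.2 := hp1.trans hp2
  have hdiff : DifferentiableAt ℝ (fderiv ℝ f) x :=
    ((hf.fderiv_of_isOpen hΩ (m := 1) le_rfl).differentiableOn one_ne_zero).differentiableAt
      (hΩ.mem_nhds hx)
  have hlim := tendsto_inv_sq_mul_sum_Iavg_sub hΩ hf hx (sum_nbrSet_eq_zero hp1 hp2')
  rw [sum_nbrSet_apply_self hp1 hp2, ← pd1_pd1_add_pd2_pd2 hdiff] at hlim
  have hsum : ∀ᶠ l in 𝓝[>] (0 : ℝ),
      1 / l ^ 2 * ∑ v ∈ nbrSet p, (Iavg f (x + l • v) l - Iavg f x l) =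
        1 / l ^ 2 * ∑ᶠ x' ∈ {x' : ℝ × ℝ | isNbr p l x x'}, (Iavg f x' l - Iavg f x l) :=
    eventually_nhdsWithin_of_forall fun l (hl : 0 < l) => by rw [finsum_isNbr_eq_sum hp1 hp2' hl]
  convert hlim.congr' hsum using 2
  ring
end
end
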